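/- arXiv:math/0310025 — 5 statements merged into one kernel-verified Lean document; each statement's English description precedes it below -/
import Mathlib

section
/- Let g : E → ℤ/4ℤ be an H-form on a finite-dimensional ℤ/2-vector space E, with associated non-degenerate symmetric bilinear form C. Then E admits an orthonormal basis with respect to C, i.e. a basis e₁,…,eₙ satisfying C(eᵢ,eⱼ) = δᵢⱼ for all i,j. -/
/-!
An odd value `g x` forces `C x x = 1`, because `0 = g (x + x) = 2 g x + 2 C(x, x)`.
A vector `e` of norm one splits `E` as `⟨e⟩ ⊕ e^⊥` with `C` nondegenerate on `e^⊥`, so one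
recurses into `e^⊥` as long as it again contains a vector of norm one. If instead `e^⊥` is
alternating, nondegeneracy gives `u, v ∈ e^⊥` with `C u v = 1`; then `e' = e + u + v` has norm
one and `e + u` is a vector of norm one in `e'^⊥`.
-/

open Module
open LinearMap (BilinForm)

lemma ZMod.eq_one_of_ne_zero {a : ZMod 2} : a ≠ 0 → a = 1 := by
  revert a; decide

lemma ZMod.eq_zero_of_ne_one {a : ZMod 2} : a ≠ 1 → a = 0 := by
  revert a; decide

namespace LinearMap.BilinForm

variable {E : Type*} [AddCommGroup E] [Module (ZMod 2) E] {C : BilinForm (ZMod 2) E}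

def IsOrthonormal {ι : Type*} [DecidableEq ι] (C : BilinForm (ZMod 2) E) (v : ι → E) : Prop :=
  ∀ i j, C (v i) (v j) = if i = j then 1 else 0

lemma IsOrthonormal.cons {n : ℕ} (hC : C.IsSymm) {e : E} (he : C e e = 1) {v : Fin n → E}
    (hv : IsOrthonormal C v) (hev : ∀ i, C e (v i) = 0) :
    IsOrthonormal C (Fin.cons e v : Fin (n + 1) → E) := by
  intro i j
  cases i using Fin.cases <;> cases j using Fin.cases
  · simpa using he
  · simp [hev, (Fin.succ_ne_zero _).symm]
  · simp [hC.eq _ e, hev, Fin.succ_ne_zero]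
  · simpa using hv _ _

lemma IsOrthonormal.linearIndependent {ι : Type*} [DecidableEq ι] {v : ι → E}
    (hv : IsOrthonormal C v) : LinearIndependent (ZMod 2) v :=
  linearIndependent_of_iIsOrtho (fun i j hij => by simpa [hij] using hv i j)
    (fun i => by simp [hv i i])

lemma apply_sub_smul_self {e : E} (he : C e e = 1) (x : E) : C e (x - C e x • e) = 0 := by
  simp [he]

lemma separatingLeft_restrict_ker (hC : C.IsSymm) (hnd : C.SeparatingLeft) {e : E}
    (he : C e e = 1) : (C.restrict (LinearMap.ker (C e))).SeparatingLeft := by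
  rintro ⟨x, hx⟩ hxW
  rw [Submodule.mk_eq_zero]
  refine hnd x fun y => ?_
  have hxe : C x e = 0 := by rw [hC.eq]; exact hx
  simpa [hxe] using hxW ⟨y - C e y • e, apply_sub_smul_self he y⟩

lemma finrank_ker_add_one [FiniteDimensional (ZMod 2) E] {e : E} (he : C e e = 1) :
    finrank (ZMod 2) (LinearMap.ker (C e)) + 1 = finrank (ZMod 2) E :=
  Dual.finrank_ker_add_one_of_ne_zero fun h => by simp [h] at he

lemma exists_orthogonal_pair_of_apply_self_eq_one (hC : C.IsSymm) (hnd : C.SeparatingLeft)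
    {e : E} (he : C e e = 1) (hker : LinearMap.ker (C e) ≠ ⊥) :
    ∃ e' w, C e' e' = 1 ∧ C w w = 1 ∧ C e' w = 0 := by
  by_cases hw : ∃ w, C e w = 0 ∧ C w w = 1
  · obtain ⟨w, hew, hww⟩ := hw
    exact ⟨e, w, he, hww, hew⟩
  push Not at hw
  obtain ⟨u, hue, hu⟩ := Submodule.exists_mem_ne_zero_of_ne_bot hker
  rw [LinearMap.mem_ker] at hue
  obtain ⟨v, hve, huv⟩ : ∃ v, C e v = 0 ∧ C u v = 1 := by
    obtain ⟨y, hy⟩ : ∃ y, C u y ≠ 0 := by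
      by_contra! h
      exact hu (hnd u h)
    refine ⟨y - C e y • e, apply_sub_smul_self he y, ?_⟩
    have hue' : C u e = 0 := by rw [hC.eq]; exact hue
    simpa [hue'] using ZMod.eq_one_of_ne_zero hy
  have huu : C u u = 0 := ZMod.eq_zero_of_ne_one (hw u hue)
  have hvv : C v v = 0 := ZMod.eq_zero_of_ne_one (hw v hve)
  refine ⟨e + u + v, e + u, ?_, ?_, ?_⟩ <;>
    simp only [map_add, LinearMap.add_apply, hC.eq u e, hC.eq v e, hC.eq v u, he, hue, hve, huv,
      huu, hvv] <;>
    decide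

theorem exists_isOrthonormal_basis [FiniteDimensional (ZMod 2) E] (hC : C.IsSymm)
    (hnd : C.SeparatingLeft) (hC1 : ∃ e, C e e = 1) :
    ∃ b : Basis (Fin (finrank (ZMod 2) E)) (ZMod 2) E, IsOrthonormal C b := by
  suffices ∃ v : Fin (finrank (ZMod 2) E) → E, IsOrthonormal C v by
    obtain ⟨v, hv⟩ := this
    exact ⟨basisOfLinearIndependentOfCardEqFinrank' v hv.linearIndependent (by simp), by simpa⟩
  generalize hn : finrank (ZMod 2) E = n
  induction n generalizing E with
  | zero => exact ⟨Fin.elim0, fun i => i.elim0⟩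
  | succ n ih =>
    obtain ⟨e, he⟩ := hC1
    rcases n.eq_zero_or_pos with rfl | hpos
    · exact ⟨Fin.cons e Fin.elim0, .cons hC he (fun i => i.elim0) (fun i => i.elim0)⟩
    obtain ⟨e', w, he', hw, he'w⟩ := exists_orthogonal_pair_of_apply_self_eq_one hC hnd he
      (by rw [← Submodule.one_le_finrank_iff]; have := finrank_ker_add_one he; omega)
    obtain ⟨v, hv⟩ := ih (hC.restrict (LinearMap.ker (C e')))
      (separatingLeft_restrict_ker hC hnd he') ⟨⟨w, he'w⟩, hw⟩
      (by have := finrank_ker_add_one he'; omega)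
    exact ⟨Fin.cons e' (Subtype.val ∘ v), .cons hC he' hv fun i => (v i).2⟩

end LinearMap.BilinForm

lemma apply_self_eq_one_of_odd {E : Type*} [AddCommGroup E] [Module (ZMod 2) E]
    {C : BilinForm (ZMod 2) E} {g : E → ZMod 4}
    (hadd : ∀ x y : E, g (x + y) = g x + g y + 2 * ((C x y).val : ZMod 4)) {x : E}
    (hx : g x = 1 ∨ g x = 3) : C x x = 1 := by
  have hg0 : g 0 = 0 := by simpa using hadd 0 0
  have hxx := hadd x x
  rw [ZModModule.add_self, hg0] at hxx
  by_contra h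
  rw [ZMod.eq_zero_of_ne_one h] at hxx
  rcases hx with hx | hx <;> rw [hx] at hxx <;> revert hxx <;> decide

/-- existence of an orthonormal basis for the bilinear form of an H-form. -/
theorem hform_orthonormal_basis {E : Type*} [AddCommGroup E] [Module (ZMod 2) E]
    [FiniteDimensional (ZMod 2) E]
    (C : E →ₗ[ZMod 2] E →ₗ[ZMod 2] ZMod 2) (g : E → ZMod 4)
    (hsymm : ∀ x y : E, C x y = C y x)
    (hnd : ∀ x : E, (∀ y : E, C x y = 0) → x = 0)
    (hadd : ∀ x y : E, g (x + y) = g x + g y + 2 * ((C x y).val : ZMod 4))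
    (hodd : ∃ x : E, g x = 1 ∨ g x = 3) :
    ∃ b : Module.Basis (Fin (Module.finrank (ZMod 2) E)) (ZMod 2) E,
      ∀ i j, C (b i) (b j) = if i = j then 1 else 0 := by
  obtain ⟨x, hx⟩ := hodd
  exact LinearMap.BilinForm.exists_isOrthonormal_basis ⟨hsymm⟩ hnd
    ⟨x, apply_self_eq_one_of_odd hadd hx⟩
end

section
/- Let g : E → ℤ/4ℤ be an H-form on a finite-dimensional ℤ/2-vector space E with associated bilinear form C. For a ∈ E let T_a : E → E be the linear map T_a(x) = x + C(x,a)·a. Then T_a preserves g (i.e. g(T_a x) = g(x) for all x ∈ E) if and only if g(a) = 2 or a = 0. -/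
/-- The transvection `T_a : x ↦ x + C(x,a)·a`. -/
def Tmap {E : Type*} [AddCommGroup E] [Module (ZMod 2) E]
    (C : E →ₗ[ZMod 2] E →ₗ[ZMod 2] ZMod 2) (a : E) : E → E :=
  fun x => x + C x a • a

/-- `T_a` preserves the H-form `g` iff `g(a) = 2` or `a = 0`. -/
theorem Tmap_preserves_iff {E : Type*} [AddCommGroup E] [Module (ZMod 2) E]
    [FiniteDimensional (ZMod 2) E]
    (C : E →ₗ[ZMod 2] E →ₗ[ZMod 2] ZMod 2) (g : E → ZMod 4)
    (hsymm : ∀ x y : E, C x y = C y x)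
    (hnd : ∀ x : E, (∀ y : E, C x y = 0) → x = 0)
    (hadd : ∀ x y : E, g (x + y) = g x + g y + 2 * ((C x y).val : ZMod 4))
    (hodd : ∃ x : E, g x = 1 ∨ g x = 3)
    (a : E) :
    (∀ x : E, g (Tmap C a x) = g x) ↔ (g a = 2 ∨ a = 0) := by
  have hcases : ∀ z : ZMod 2, z = 0 ∨ z = 1 := by decide
  constructor
  · intro h
    by_cases ha : a = 0
    · exact Or.inr ha
    · left
      -- find y with C y a = 1
      have : ¬ ∀ y : E, C a y = 0 := fun hy => ha (hnd a hy)
      push_neg at this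
      obtain ⟨y, hy⟩ := this
      have hya : C y a = 1 := by
        rcases hcases (C y a) with h0 | h1
        · exact absurd (by rw [hsymm]; exact h0) hy
        · exact h1
      have := h y
      rw [Tmap, hya, one_smul, hadd y a, hya] at this
      -- this : g y + g a + 2 * ((1 : ZMod 2).val : ZMod 4) = g y
      have hv : (((1 : ZMod 2).val : ℕ) : ZMod 4) = 1 := by decide
      rw [hv] at this
      have h4 : (2 + 2 : ZMod 4) = 0 := by decide
      linear_combination this - h4
  · intro h x
    rcases h with h | h
    · rcases hcases (C x a) with h0 | h1
      · rw [Tmap, h0, zero_smul, add_zero]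
      · rw [Tmap, h1, one_smul, hadd x a, h1, h]
        have hv : (((1 : ZMod 2).val : ℕ) : ZMod 4) = 1 := by decide
        rw [hv]
        have h4 : (2 + 2 : ZMod 4) = 0 := by decide
        linear_combination h4
    · subst h
      simp [Tmap]
end

section
/- Let g : E → ℤ/4ℤ be an H-form on a finite-dimensional ℤ/2-vector space E with associated bilinear form C, and let a,b ∈ E satisfy g(a) = g(b) = 0 and C(a,b) = 0. Then the map S_{a,b} = T_a ∘ T_b ∘ T_{a+b} preserves g (i.e. g(S_{a,b} x) = g(x) for all x ∈ E), and it is given by the formula S_{a,b}(x) = x + C(x,b)·a + C(x,a)·b for all x ∈ E. -/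
/-- if `g(a) = g(b) = 0` and `C(a,b) = 0` then
`S_{a,b} = T_a ∘ T_b ∘ T_{a+b}` preserves `g` and is given by
`S_{a,b}(x) = x + C(x,b)·a + C(x,a)·b`. -/
theorem Smap_preserves_and_formula {E : Type*} [AddCommGroup E] [Module (ZMod 2) E]
    [FiniteDimensional (ZMod 2) E]
    (C : E →ₗ[ZMod 2] E →ₗ[ZMod 2] ZMod 2) (g : E → ZMod 4)
    (hsymm : ∀ x y : E, C x y = C y x)
    (hnd : ∀ x : E, (∀ y : E, C x y = 0) → x = 0)
    (hadd : ∀ x y : E, g (x + y) = g x + g y + 2 * ((C x y).val : ZMod 4))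
    (hodd : ∃ x : E, g x = 1 ∨ g x = 3)
    (a b : E) (ha : g a = 0) (hb : g b = 0) (hab : C a b = 0) :
    (∀ x : E, g (Tmap C a (Tmap C b (Tmap C (a + b) x))) = g x) ∧
    (∀ x : E, Tmap C a (Tmap C b (Tmap C (a + b) x)) = x + C x b • a + C x a • b) := by
  have h2 : ∀ c : ZMod 2, c = 0 ∨ c = 1 := by decide
  have hvv : ∀ v : E, v + v = 0 := by
    intro v
    have h20 : (2 : ZMod 2) = 0 := by decide
    rw [← two_smul (ZMod 2) v, h20, zero_smul]
  have h2v : ∀ v : E, (2 : ℕ) • v = 0 := by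
    intro v; rw [two_smul]; exact hvv v
  have h2z : ∀ v : E, (2 : ℤ) • v = 0 := by
    intro v; rw [two_smul]; exact hvv v
  have h0 : g 0 = 0 := by simpa using hadd 0 0
  have hsq : ∀ c : E, g c = 0 → C c c = 0 := by
    intro c hc
    have h := hadd c c
    rw [hvv c, h0, hc] at h
    rcases h2 (C c c) with hh | hh
    · exact hh
    · rw [hh] at h
      simp only [ZMod.val_one, Nat.cast_one] at h
      exact absurd h (by decide)
  have hba : C b a = 0 := by rw [hsymm]; exact hab
  have haa := hsq a ha
  have hbb := hsq b hb
  have hform : ∀ x : E, Tmap C a (Tmap C b (Tmap C (a + b) x)) = x + C x b • a + C x a • b := by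
    intro x
    rcases h2 (C x a) with hα | hα <;> rcases h2 (C x b) with hβ | hβ <;>
      simp [Tmap, map_add, LinearMap.add_apply, map_smul, LinearMap.smul_apply,
        smul_eq_mul, haa, hbb, hab, hba, hα, hβ] <;>
      (try abel_nf) <;>
      simp [two_nsmul, two_zsmul, hvv, show (((2:ℤ) • (1 : ZMod 2))) = 0 from by decide] <;> try abel
  refine ⟨?_, hform⟩
  intro x
  rw [hform x]
  rcases h2 (C x a) with hα | hα <;> rcases h2 (C x b) with hβ | hβ <;>
    rw [hα, hβ] <;> simp only [one_smul, zero_smul, add_zero, zero_add]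
  · rw [hadd x a, ha, hα]; simp
  · rw [hadd x b, hb, hβ]; simp
  · have hC : C (x + a) b = 1 := by
      rw [map_add, LinearMap.add_apply, hβ, hab, add_zero]
    rw [hadd (x + a) b, hadd x a, ha, hα, hb, hC, ZMod.val_one]
    ring_nf
    simp [show ((4:ZMod 4)) = 0 from by decide]
end

section
/- Let g : E → ℤ/4ℤ be an H-form on a finite-dimensional ℤ/2-vector space E with associated bilinear form C. Let a,b,s ∈ E satisfy g(a) = g(b) = 0, C(a,b) = 0, g(s) = 2, and C(s,a) = C(s,b) = 0. Then g(s+a) = g(s+b) = g(s+a+b) = 2 and S_{a,b} = T_s ∘ T_{s+a} ∘ T_{s+b} ∘ T_{s+a+b}. -/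
/-- if `g(a) = g(b) = 0`, `C(a,b) = 0`, `g(s) = 2` and
`C(s,a) = C(s,b) = 0`, then `g(s+a) = g(s+b) = g(s+a+b) = 2` and
`S_{a,b} = T_s ∘ T_{s+a} ∘ T_{s+b} ∘ T_{s+a+b}`. -/
theorem Smap_as_product_of_four_Tmaps
    {E : Type*} [AddCommGroup E] [Module (ZMod 2) E] [FiniteDimensional (ZMod 2) E]
    (C : E →ₗ[ZMod 2] E →ₗ[ZMod 2] ZMod 2) (g : E → ZMod 4)
    (hsymm : ∀ x y : E, C x y = C y x)
    (hnd : ∀ x : E, (∀ y : E, C x y = 0) → x = 0)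
    (hadd : ∀ x y : E, g (x + y) = g x + g y + 2 * ((C x y).val : ZMod 4))
    (hodd : ∃ x : E, g x = 1 ∨ g x = 3)
    (a b s : E) (ha : g a = 0) (hb : g b = 0) (hab : C a b = 0)
    (hs : g s = 2) (hsa : C s a = 0) (hsb : C s b = 0) :
    g (s + a) = 2 ∧ g (s + b) = 2 ∧ g (s + a + b) = 2 ∧
    ∀ x : E, Tmap C a (Tmap C b (Tmap C (a + b) x)) =
      Tmap C s (Tmap C (s + a) (Tmap C (s + b) (Tmap C (s + a + b) x))) := by
  have h2 : ∀ c : ZMod 2, 2 * ((c.val : ZMod 4)) = 0 → c = 0 := by decide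
  have h01 : ∀ c : ZMod 2, c = 0 ∨ c = 1 := by decide
  have hxx : ∀ x : E, x + x = 0 := by
    intro x
    rw [← two_smul (ZMod 2) x, show (2 : ZMod 2) = 0 from rfl, zero_smul]
  have hg0 : g 0 = 0 := by
    have h := hadd 0 0
    simp only [add_zero, map_zero, LinearMap.zero_apply, ZMod.val_zero,
      Nat.cast_zero, mul_zero] at h
    linear_combination -h
  have haa : C a a = 0 := by
    apply h2
    have h := hadd a a
    rw [hxx a, hg0, ha] at h
    linear_combination -h
  have hbb : C b b = 0 := by
    apply h2
    have h := hadd b b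
    rw [hxx b, hg0, hb] at h
    linear_combination -h
  have hss : C s s = 0 := by
    apply h2
    have h := hadd s s
    rw [hxx s, hg0, hs, show (2 : ZMod 4) + 2 = 0 from rfl, zero_add] at h
    exact h.symm
  have hba : C b a = 0 := (hsymm b a).trans hab
  have has : C a s = 0 := (hsymm a s).trans hsa
  have hbs : C b s = 0 := (hsymm b s).trans hsb
  have hgsa : g (s + a) = 2 := by
    rw [hadd s a, hs, ha, hsa]; simp
  have hgsb : g (s + b) = 2 := by
    rw [hadd s b, hs, hb, hsb]; simp
  have hgsab : g (s + a + b) = 2 := by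
    rw [hadd (s + a) b, hgsa, hb]
    have : C (s + a) b = 0 := by rw [map_add, LinearMap.add_apply, hsb, hab, add_zero]
    rw [this]; simp
  have e2 : ∀ y : E, (2 : ℕ) • y = 0 := fun y => by rw [two_smul]; exact hxx y
  have e4 : ∀ y : E, (4 : ℕ) • y = 0 := fun y => by
    rw [show (4 : ℕ) = 2 + 2 from rfl, add_smul, e2, add_zero]
  have e3 : ∀ y : E, (3 : ℕ) • y = y := fun y => by
    rw [show (3 : ℕ) = 2 + 1 from rfl, add_smul, e2, one_smul, zero_add]
  have z2 : ∀ y : E, (2 : ℤ) • y = 0 := fun y => by rw [two_smul]; exact hxx y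
  have z4 : ∀ y : E, (4 : ℤ) • y = 0 := fun y => by
    rw [show (4 : ℤ) = 2 + 2 from rfl, add_smul, z2, add_zero]
  have z3 : ∀ y : E, (3 : ℤ) • y = y := fun y => by
    rw [show (3 : ℤ) = 2 + 1 from rfl, add_smul, z2, one_smul, zero_add]
  refine ⟨hgsa, hgsb, hgsab, ?_⟩
  intro x
  simp only [Tmap, map_add, map_smul, LinearMap.add_apply, LinearMap.smul_apply,
    smul_eq_mul, haa, hbb, hss, hab, hba, hsa, has, hsb, hbs,
    mul_zero, zero_mul, add_zero, zero_add]
  rcases h01 (C x a) with h1 | h1 <;> rcases h01 (C x b) with h2' | h2' <;>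
    rcases h01 (C x s) with h3 | h3 <;>
    simp only [h1, h2', h3, zero_smul, one_smul, zero_mul, one_mul, mul_zero, mul_one,
      add_zero, zero_add, smul_add, show (1 : ZMod 2) + 1 = 0 from rfl,
      show (0 : ZMod 2) + 1 = 1 from rfl, show (1 : ZMod 2) + 0 = 1 from rfl] <;>
    (try abel_nf) <;>
    (try simp only [e2, e3, e4, z2, z3, z4, zero_add, add_zero, smul_zero]) <;>
    (try abel)
end

section
/- Let g : E → ℤ/4ℤ be an H-form on a finite-dimensional ℤ/2-vector space E. Define ψ : O(E,g) → ℤ/2 by ψ(T) = rank(T − Id) mod 2. Then ψ is a group homomorphism, i.e. ψ(T ∘ S) = ψ(T) + ψ(S) for all T, S ∈ O(E,g). -/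
/-!
Let `T`, `S` be isometries of a nondegenerate symmetric form `B`, put `D = im(T - 1) ∩ im(S - 1)`
and, for `v ∈ D`, write `v = (T - 1) p = (S - 1) q` with `p`, `q` depending linearly on `v`.
Since `ker(U - 1) = im(U - 1)^⊥` for an isometry `U`, the radical of the form
`β(v, w) = B(p + q + v, w)` on `D` is `(S - 1)(ker(TS - 1))`, and counting dimensions gives
`rank(TS - 1) + 2 dim D = rank(T - 1) + rank(S - 1) + rank β`.
Here `β(v, v) = B(q, v) - B(p, v)`, and for an `H`-form `g` both terms are half of `g(v)`, because
`g((U - 1) p) = 2 B(p, (U - 1) p)` for `U ∈ O(E, g)`. So `β` is alternating and has even rank.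
-/

open Module LinearMap

namespace LinearMap.BilinForm

variable {K V : Type*} [Field K] [AddCommGroup V] [Module K V] {B : LinearMap.BilinForm K V}

theorem IsAlt.eq_zero_of_apply_smul_add_smul {u v : V} (hB : B.IsAlt) (huv : B u v ≠ 0)
    {s t : K} (hu : B (s • u + t • v) u = 0) (hv : B (s • u + t • v) v = 0) :
    s = 0 ∧ t = 0 := by
  simp only [map_add, map_smul, LinearMap.add_apply, LinearMap.smul_apply, smul_eq_mul,
    hB.self_eq_zero] at hu hv
  rw [← hB.neg_eq u v] at hu
  constructor
  · simpa [huv] using hv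
  · simpa [huv] using hu

theorem IsAlt.linearIndependent_pair {u v : V} (hB : B.IsAlt) (huv : B u v ≠ 0) :
    LinearIndependent K ![u, v] :=
  LinearIndependent.pair_iff.mpr fun s t h ↦
    hB.eq_zero_of_apply_smul_add_smul huv (by simp [h]) (by simp [h])

theorem IsAlt.nondegenerate_restrict_span_pair {u v : V} (hB : B.IsAlt) (huv : B u v ≠ 0) :
    (B.restrict (Submodule.span K {u, v})).Nondegenerate := by
  have hrefl : (B.restrict (Submodule.span K {u, v})).IsRefl := fun x y ↦ hB.isRefl x y
  refine (IsRefl.nondegenerate_iff_separatingLeft hrefl).mpr ?_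
  rintro ⟨x, hx⟩ h
  obtain ⟨s, t, rfl⟩ := Submodule.mem_span_pair.mp hx
  obtain ⟨rfl, rfl⟩ := hB.eq_zero_of_apply_smul_add_smul huv
    (h ⟨u, Submodule.subset_span (by simp)⟩) (h ⟨v, Submodule.subset_span (by simp)⟩)
  simp

theorem IsAlt.even_finrank_range [FiniteDimensional K V] (hB : B.IsAlt) :
    Even (finrank K (range B)) := by
  induction hn : finrank K V using Nat.strong_induction_on generalizing V with
  | _ n ih =>
  by_cases h0 : B = 0
  · rw [h0, range_zero, finrank_bot]
    exact Even.zero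
  obtain ⟨u, v, huv⟩ : ∃ u v, B u v ≠ 0 := by
    by_contra! h
    exact h0 (ext₂ h)
  have hP : finrank K (Submodule.span K {u, v}) = 2 := by
    rw [← Matrix.range_cons_cons_empty u v ![],
      finrank_span_eq_card (hB.linearIndependent_pair huv), Fintype.card_fin]
  set P := Submodule.span K {u, v}
  set W := B.orthogonal P
  have hPW : IsCompl P W :=
    isCompl_orthogonal_of_restrict_nondegenerate hB.isRefl (hB.nondegenerate_restrict_span_pair huv)
  have hW : finrank K P + finrank K W = n := hn ▸ Submodule.finrank_add_eq_of_isCompl hPW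
  have hker : finrank K (ker (B.restrict W)) = finrank K (ker B) := by
    rw [ker_restrict_eq_of_codisjoint hPW.symm.codisjoint fun x hx y hy ↦ hB.isRefl _ _ (hx y hy)]
    refine (Submodule.comapSubtypeEquivOfLe fun x hx y _ ↦ ?_).finrank_eq
    exact hB.isRefl _ _ (LinearMap.congr_fun (mem_ker.mp hx) y)
  obtain ⟨k, hk⟩ := ih _ (by omega) (B := B.restrict W) (fun x ↦ hB x) rfl
  have hrank := finrank_range_add_finrank_ker B
  have hrankW := finrank_range_add_finrank_ker (B.restrict W)
  exact ⟨k + 1, by omega⟩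

theorem orthogonal_sup (W W' : Submodule K V) :
    B.orthogonal (W ⊔ W') = B.orthogonal W ⊓ B.orthogonal W' := by
  refine le_antisymm (le_inf (orthogonal_le le_sup_left) (orthogonal_le le_sup_right)) ?_
  rintro x ⟨hW, hW'⟩ y hy
  obtain ⟨w, hw, w', hw', rfl⟩ := Submodule.mem_sup.mp hy
  simp only [map_add, LinearMap.add_apply]
  rw [hW w hw, hW' w' hw', add_zero]

theorem orthogonal_inf [FiniteDimensional K V] (hB : B.Nondegenerate) (hB₀ : B.IsRefl)
    (W W' : Submodule K V) : B.orthogonal (W ⊓ W') = B.orthogonal W ⊔ B.orthogonal W' := by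
  conv_lhs => rw [← orthogonal_orthogonal hB hB₀ W, ← orthogonal_orthogonal hB hB₀ W',
    ← orthogonal_sup, orthogonal_orthogonal hB hB₀]

end LinearMap.BilinForm

namespace Module.End

variable {R M : Type*} [Ring R] [AddCommGroup M] [Module R M] (T S : Module.End R M)

theorem ker_mul_sub_one_inf_ker_sub_one :
    ker (T * S - 1) ⊓ ker (S - 1) = ker (T - 1) ⊓ ker (S - 1) := by
  ext x
  simp only [Submodule.mem_inf, mem_ker, LinearMap.sub_apply, mul_apply, one_apply, sub_eq_zero]
  exact ⟨fun ⟨h, hS⟩ ↦ ⟨by rwa [hS] at h, hS⟩,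
    fun ⟨h, hS⟩ ↦ ⟨by rwa [hS], hS⟩⟩

theorem map_sub_one_ker_mul_sub_one_le :
    (ker (T * S - 1)).map (S - 1) ≤ range (T - 1) ⊓ range (S - 1) := by
  rintro _ ⟨x, hx, rfl⟩
  simp only [SetLike.mem_coe, mem_ker, LinearMap.sub_apply, mul_apply, one_apply, sub_eq_zero] at hx
  refine ⟨⟨-S x, ?_⟩, ⟨x, rfl⟩⟩
  simp only [LinearMap.sub_apply, one_apply, map_neg, hx]
  abel

theorem add_add_mem_ker_sup_ker_iff {p q : M} (hpq : (T - 1) p = (S - 1) q) :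
    p + q + (T - 1) p ∈ ker (T - 1) ⊔ ker (S - 1) ↔
      (T - 1) p ∈ (ker (T * S - 1)).map (S - 1) := by
  simp only [LinearMap.sub_apply, one_apply] at hpq ⊢
  constructor
  · intro h
    obtain ⟨k₁, hk₁, k₂, hk₂, hsum⟩ := Submodule.mem_sup.mp h
    simp only [mem_ker, LinearMap.sub_apply, one_apply, sub_eq_zero] at hk₁ hk₂
    have hSq : S q = q + (T p - p) := by rw [hpq]; abel
    have hk₂' : k₂ = q + T p - k₁ := by rw [eq_sub_of_add_eq' hsum]; abel
    refine ⟨q - k₂, ?_, ?_⟩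
    · simp only [SetLike.mem_coe, mem_ker, LinearMap.sub_apply, mul_apply, one_apply, sub_eq_zero]
      rw [map_sub S, hk₂, hSq, hk₂']
      simp only [map_sub, map_add, hk₁]
      abel
    · simp only [LinearMap.sub_apply, one_apply, map_sub, hk₂, hSq]
      abel
  · rintro ⟨x, hx, hv⟩
    simp only [SetLike.mem_coe, mem_ker, LinearMap.sub_apply, mul_apply, one_apply,
      sub_eq_zero] at hx hv
    refine Submodule.mem_sup.mpr ⟨p + S x, ?_, q - x, ?_, ?_⟩
    · simp only [mem_ker, LinearMap.sub_apply, one_apply, map_add, hx, ← hv]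
      abel
    · simp only [mem_ker, LinearMap.sub_apply, one_apply, map_sub]
      rw [← hpq, hv, sub_self]
    · rw [← hv]
      abel

end Module.End

theorem Submodule.finrank_map_add_finrank_inf_ker {K V V' : Type*} [Field K] [AddCommGroup V]
    [Module K V] [AddCommGroup V'] [Module K V'] [FiniteDimensional K V] (f : V →ₗ[K] V')
    (P : Submodule K V) : finrank K (P.map f) + finrank K ↥(P ⊓ ker f) = finrank K P := by
  rw [← range_domRestrict, ← Submodule.map_comap_subtype, Submodule.finrank_map_subtype_eq,
    ← ker_domRestrict]
  exact finrank_range_add_finrank_ker _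

theorem LinearMap.exists_section_of_le_range {K V V' : Type*} [Field K] [AddCommGroup V]
    [Module K V] [AddCommGroup V'] [Module K V'] (f : V →ₗ[K] V') {W : Submodule K V'}
    (hW : W ≤ range f) : ∃ σ : W →ₗ[K] V, ∀ w, f (σ w) = w := by
  obtain ⟨σ, hσ⟩ := Module.projective_lifting_property f.rangeRestrict
    (Submodule.inclusion hW) f.surjective_rangeRestrict
  exact ⟨σ, fun w ↦ congrArg Subtype.val (LinearMap.congr_fun hσ w)⟩

namespace LinearMap.IsOrthogonal

open LinearMap.BilinForm

variable {K V : Type*} [Field K] [AddCommGroup V] [Module K V] {B : LinearMap.BilinForm K V}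
  {U T S : Module.End K V}

theorem injective (hU : B.IsOrthogonal U) (hB : B.SeparatingLeft) : Function.Injective U :=
  (injective_iff_map_eq_zero U).mpr fun x hx ↦
    hB x fun y ↦ by rw [← hU x y, hx, map_zero, zero_apply]

theorem apply_sub_one_left (hU : B.IsOrthogonal U) (x y : V) :
    B ((U - 1) x) y = -B (U x) ((U - 1) y) := by
  simp only [sub_apply, Module.End.one_apply, map_sub, LinearMap.sub_apply, hU x y]
  ring

theorem apply_sub_one_self (hU : B.IsOrthogonal U) (hB : B.IsSymm) (x : V) :
    B ((U - 1) x) ((U - 1) x) = -2 * B x ((U - 1) x) := by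
  simp only [sub_apply, Module.End.one_apply, map_sub, LinearMap.sub_apply, hU x x,
    hB.eq (U x) x]
  ring

variable [FiniteDimensional K V]

theorem orthogonal_range_sub_one (hU : B.IsOrthogonal U)
    (hB : B.Nondegenerate) : B.orthogonal (range (U - 1)) = ker (U - 1) := by
  have hsurj := (injective_iff_surjective (f := U)).mp (hU.injective hB.1)
  ext y
  simp only [mem_orthogonal_iff, mem_range, forall_exists_index, forall_apply_eq_imp_iff,
    hU.apply_sub_one_left, neg_eq_zero, mem_ker]
  exact ⟨fun h ↦ hB.2 _ fun z ↦ by obtain ⟨x, rfl⟩ := hsurj z; exact h x,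
    fun h x ↦ by rw [h, map_zero]⟩

theorem exists_isAlt_ker_eq (hT : B.IsOrthogonal T) (hS : B.IsOrthogonal S)
    (hB : B.Nondegenerate) (hBs : B.IsSymm)
    (hTS : ∀ p q, (T - 1) p = (S - 1) q → B p ((T - 1) p) = B q ((S - 1) q)) :
    ∃ β : LinearMap.BilinForm K ↥(range (T - 1) ⊓ range (S - 1)), β.IsAlt ∧
      ker β = ((ker (T * S - 1)).map (S - 1)).comap (Submodule.subtype _) := by
  set D := range (T - 1) ⊓ range (S - 1)
  obtain ⟨σT, hσT⟩ := (T - 1).exists_section_of_le_range (inf_le_left : D ≤ _)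
  obtain ⟨σS, hσS⟩ := (S - 1).exists_section_of_le_range (inf_le_right : D ≤ _)
  have hpq (v : D) : (T - 1) (σT v) = (S - 1) (σS v) := by rw [hσT, hσS]
  refine ⟨B.compl₁₂ (σT + σS + D.subtype) D.subtype, fun v ↦ ?_, ?_⟩
  · have hcompat := hTS _ _ (hpq v)
    have hvv := hT.apply_sub_one_self hBs (σT v)
    rw [hσT, hσS] at hcompat
    rw [hσT] at hvv
    simp only [compl₁₂_apply, LinearMap.add_apply, Submodule.subtype_apply, map_add]
    linear_combination hvv - hcompat
  · ext v
    have hiff := Module.End.add_add_mem_ker_sup_ker_iff T S (hpq v)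
    rw [← hT.orthogonal_range_sub_one hB, ← hS.orthogonal_range_sub_one hB,
      ← orthogonal_inf hB hBs.isRefl, hσT] at hiff
    rw [mem_ker, Submodule.mem_comap, Submodule.subtype_apply, ← hiff, mem_orthogonal_iff]
    refine ⟨fun h w hw ↦ ?_, fun h ↦ ext fun w ↦ ?_⟩
    · rw [hBs.eq]
      exact LinearMap.congr_fun h ⟨w, hw⟩
    · rw [compl₁₂_apply, hBs.eq]
      exact h w w.2

theorem natCast_finrank_range_mul_sub_one (hT : B.IsOrthogonal T) (hS : B.IsOrthogonal S)
    (hB : B.Nondegenerate) (hBs : B.IsSymm)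
    (hTS : ∀ p q, (T - 1) p = (S - 1) q → B p ((T - 1) p) = B q ((S - 1) q)) :
    (finrank K (range (T * S - 1)) : ZMod 2) =
      finrank K (range (T - 1)) + finrank K (range (S - 1)) := by
  obtain ⟨β, hβ, hβker⟩ := exists_isAlt_ker_eq hT hS hB hBs hTS
  obtain ⟨r, hr⟩ := hβ.even_finrank_range
  have hβ_rank := finrank_range_add_finrank_ker β
  have hβ_ker : finrank K (ker β) = finrank K ((ker (T * S - 1)).map (S - 1)) := by
    rw [hβker]
    exact (Submodule.comapSubtypeEquivOfLe
      (Module.End.map_sub_one_ker_mul_sub_one_le T S)).finrank_eq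
  have hTS_rank := finrank_range_add_finrank_ker (T * S - 1)
  have hmap := Submodule.finrank_map_add_finrank_inf_ker (S - 1) (ker (T * S - 1))
  rw [Module.End.ker_mul_sub_one_inf_ker_sub_one, ← hT.orthogonal_range_sub_one hB,
    ← hS.orthogonal_range_sub_one hB, ← orthogonal_sup, finrank_orthogonal hB] at hmap
  have hsup_le := Submodule.finrank_le (range (T - 1) ⊔ range (S - 1))
  have hsup_inf := Submodule.finrank_sup_add_finrank_inf_eq (range (T - 1)) (range (S - 1))
  have hcount : finrank K (range (T * S - 1)) + 2 * finrank K ↥(range (T - 1) ⊓ range (S - 1)) =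
      finrank K (range (T - 1)) + finrank K (range (S - 1)) + 2 * r := by
    omega
  have hcount₂ := congrArg (Nat.cast : ℕ → ZMod 2) hcount
  push_cast at hcount₂
  rwa [show (2 : ZMod 2) = 0 from rfl, zero_mul, zero_mul, add_zero, add_zero] at hcount₂

end LinearMap.IsOrthogonal

theorem ZMod.two_mul_val_injective :
    Function.Injective fun c : ZMod 2 ↦ 2 * (c.val : ZMod 4) := by
  decide

theorem ZMod.two_mul_val_add (c d : ZMod 2) :
    2 * ((c + d).val : ZMod 4) = 2 * c.val + 2 * d.val := by
  decide +revert

section HForm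

variable {E : Type*} [AddCommGroup E] [Module (ZMod 2) E] {C : LinearMap.BilinForm (ZMod 2) E}
  {g : E → ZMod 4}

theorem two_mul_eq_two_mul_val_apply_self
    (hadd : ∀ x y, g (x + y) = g x + g y + 2 * ((C x y).val : ZMod 4)) (x : E) :
    2 * g x = 2 * ((C x x).val : ZMod 4) := by
  have h0 := hadd 0 0
  have hx := hadd x x
  simp only [add_zero, map_zero, ZMod.val_zero, Nat.cast_zero, mul_zero] at h0
  rw [ZModModule.add_self, show g 0 = 0 by linear_combination -h0] at hx
  have h4 : (4 : ZMod 4) = 0 := rfl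
  linear_combination -hx - ((C x x).val : ZMod 4) * h4

theorem isOrthogonal_of_forall_apply_eq
    (hadd : ∀ x y, g (x + y) = g x + g y + 2 * ((C x y).val : ZMod 4)) {U : Module.End (ZMod 2) E}
    (hU : ∀ x, g (U x) = g x) : C.IsOrthogonal U := fun x y ↦ by
  apply ZMod.two_mul_val_injective
  have h := hadd (U x) (U y)
  rw [← map_add, hU, hU, hU, hadd x y, add_right_inj] at h
  exact h.symm

theorem apply_sub_one_eq_two_mul_val
    (hadd : ∀ x y, g (x + y) = g x + g y + 2 * ((C x y).val : ZMod 4)) (hC : C.IsSymm)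
    {U : Module.End (ZMod 2) E} (hU : ∀ x, g (U x) = g x) (p : E) :
    g ((U - 1) p) = 2 * ((C p ((U - 1) p)).val : ZMod 4) := by
  rw [LinearMap.sub_apply, Module.End.one_apply, ZModModule.sub_eq_add, hadd, hU, map_add,
    ZMod.two_mul_val_add, hC.eq (U p), ← two_mul, two_mul_eq_two_mul_val_apply_self hadd]
  ring

end HForm

theorem psi_is_homomorphism_general
    {E : Type*} [AddCommGroup E] [Module (ZMod 2) E] [FiniteDimensional (ZMod 2) E]
    (C : E →ₗ[ZMod 2] E →ₗ[ZMod 2] ZMod 2) (g : E → ZMod 4)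
    (hsymm : ∀ x y : E, C x y = C y x)
    (hnd : ∀ x : E, (∀ y : E, C x y = 0) → x = 0)
    (hadd : ∀ x y : E, g (x + y) = g x + g y + 2 * ((C x y).val : ZMod 4))
    (T S : Module.End (ZMod 2) E)
    (hT : ∀ x : E, g (T x) = g x) (hS : ∀ x : E, g (S x) = g x) :
    (Module.finrank (ZMod 2) (LinearMap.range (T * S - 1)) : ZMod 2) =
      (Module.finrank (ZMod 2) (LinearMap.range (T - 1)) : ZMod 2) +
      (Module.finrank (ZMod 2) (LinearMap.range (S - 1)) : ZMod 2) := by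
  have hCs : BilinForm.IsSymm C := ⟨hsymm⟩
  have hCnd : C.Nondegenerate := (IsRefl.nondegenerate_iff_separatingLeft hCs.isRefl).mpr hnd
  refine (isOrthogonal_of_forall_apply_eq hadd hT).natCast_finrank_range_mul_sub_one
    (isOrthogonal_of_forall_apply_eq hadd hS) hCnd hCs fun p q hpq ↦ ZMod.two_mul_val_injective ?_
  calc 2 * ((C p ((T - 1) p)).val : ZMod 4)
      _ = g ((T - 1) p) := (apply_sub_one_eq_two_mul_val hadd hCs hT p).symm
      _ = g ((S - 1) q) := by rw [hpq]
      _ = 2 * ((C q ((S - 1) q)).val : ZMod 4) := apply_sub_one_eq_two_mul_val hadd hCs hS q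

/-- `ψ(T) = rank(T - Id) mod 2` is a group homomorphism on `O(E,g)`. -/
theorem psi_is_homomorphism
    {E : Type*} [AddCommGroup E] [Module (ZMod 2) E] [FiniteDimensional (ZMod 2) E]
    (C : E →ₗ[ZMod 2] E →ₗ[ZMod 2] ZMod 2) (g : E → ZMod 4)
    (hsymm : ∀ x y : E, C x y = C y x)
    (hnd : ∀ x : E, (∀ y : E, C x y = 0) → x = 0)
    (hadd : ∀ x y : E, g (x + y) = g x + g y + 2 * ((C x y).val : ZMod 4))
    (hodd : ∃ x : E, g x = 1 ∨ g x = 3)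
    (T S : Module.End (ZMod 2) E)
    (hT : ∀ x : E, g (T x) = g x) (hS : ∀ x : E, g (S x) = g x) :
    (Module.finrank (ZMod 2) (LinearMap.range (T * S - 1)) : ZMod 2) =
      (Module.finrank (ZMod 2) (LinearMap.range (T - 1)) : ZMod 2) +
      (Module.finrank (ZMod 2) (LinearMap.range (S - 1)) : ZMod 2) :=
  psi_is_homomorphism_general C g hsymm hnd hadd T S hT hS
end
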